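/- Let r ∈ ℕ, r ≥ 1, and let χ satisfy M_r(χ) < ∞ and the moment condition of order r with constant c. Then for every w > 0, S_w maps algebraic polynomials of total degree at most r−1 into algebraic polynomials of the same degree: for every bivariate polynomial P with deg P ≤ r−1 there exists a bivariate polynomial Q with deg Q = deg P such that (S_w P)(x,y) = Q(x,y) for all (x,y) ∈ ℝ². -/

import Mathlib

open MeasureTheory Filter
open scoped ENNReal BigOperators Topology

noncomputable def absMoment (χ : ℝ × ℝ → ℝ) (p₁ p₂ : ℕ) : ℝ≥0∞ :=
  ⨆ u : ℝ, ⨆ v : ℝ, ∑' k : ℤ, ∑' j : ℤ,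
    ENNReal.ofReal (|χ (u - (k : ℝ), v - (j : ℝ))| * |u - (k : ℝ)| ^ p₁ * |v - (j : ℝ)| ^ p₂)

noncomputable def Mmoment (χ : ℝ × ℝ → ℝ) (η : ℕ) : ℝ≥0∞ :=
  ⨆ p : {p : ℕ × ℕ // p.1 + p.2 = η}, absMoment χ p.1.1 p.1.2

def PartitionOfUnity2 (χ : ℝ × ℝ → ℝ) : Prop :=
  ∀ u v : ℝ, ∑' k : ℤ, ∑' j : ℤ, χ (u - (k : ℝ), v - (j : ℝ)) = 1

def MomentCondition (χ : ℝ × ℝ → ℝ) (r : ℕ) (c : ℝ) : Prop :=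
  (∀ u v : ℝ, ∀ p₁ p₂ : ℕ, 1 ≤ p₁ + p₂ → p₁ + p₂ ≤ r - 1 →
    ∑' k : ℤ, ∑' j : ℤ, χ (u - (k : ℝ), v - (j : ℝ)) * (u - (k : ℝ)) ^ p₁ * (v - (j : ℝ)) ^ p₂ = 0) ∧
  (∀ u v : ℝ, ∀ p₁ p₂ : ℕ, p₁ + p₂ = r →
    ∑' k : ℤ, ∑' j : ℤ, χ (u - (k : ℝ), v - (j : ℝ)) * (u - (k : ℝ)) ^ p₁ * (v - (j : ℝ)) ^ p₂ = c)

noncomputable def Gop (χ : ℝ × ℝ → ℝ) (w : ℝ) (f : ℝ × ℝ → ℝ) (x y : ℝ) : ℝ :=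
  ∑' k : ℤ, ∑' j : ℤ, χ (w * x - (k : ℝ), w * y - (j : ℝ)) * f ((k : ℝ) / w, (j : ℝ) / w)

noncomputable def Sop (χ : ℝ × ℝ → ℝ) (w : ℝ) (f : ℝ × ℝ → ℝ) (x y : ℝ) : ℝ :=
  ∑' k : ℤ, ∑' j : ℤ, χ (w * x - (k : ℝ), w * y - (j : ℝ)) *
    (w ^ 2 * ∫ u in ((k : ℝ) / w)..(((k : ℝ) + 1) / w),
      ∫ v in ((j : ℝ) / w)..(((j : ℝ) + 1) / w), f (u, v))

noncomputable def pX (f : ℝ × ℝ → ℝ) : ℝ × ℝ → ℝ := fun p => deriv (fun t => f (t, p.2)) p.1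
noncomputable def pY (f : ℝ × ℝ → ℝ) : ℝ × ℝ → ℝ := fun p => deriv (fun t => f (p.1, t)) p.2
noncomputable def pd (f : ℝ × ℝ → ℝ) (i j : ℕ) : ℝ × ℝ → ℝ := pX^[i] (pY^[j] f)

noncomputable def supNorm (g : ℝ × ℝ → ℝ) : ℝ := ⨆ p : ℝ × ℝ, |g p|

def mixedDiff (f : ℝ × ℝ → ℝ) (u v x y : ℝ) : ℝ := f (x, y) - f (x, v) - f (u, y) + f (u, v)

def BContinuous (f : ℝ × ℝ → ℝ) : Prop :=
  ∀ x₀ y₀ : ℝ, Tendsto (fun p : ℝ × ℝ => mixedDiff f x₀ y₀ p.1 p.2) (nhds (x₀, y₀)) (nhds 0)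

noncomputable def omegaB (f : ℝ × ℝ → ℝ) (δ₁ δ₂ : ℝ) : ℝ :=
  sSup {t : ℝ | ∃ x y u v : ℝ, |x - u| < δ₁ ∧ |y - v| < δ₂ ∧ t = |mixedDiff f u v x y|}

noncomputable def Kop (χ : ℝ × ℝ → ℝ) (w : ℝ) (f : ℝ × ℝ → ℝ) (x y : ℝ) : ℝ :=
  Sop χ w (fun p => f (p.1, y) + f (x, p.2) - f (p.1, p.2)) x y

/-!
On a cell the Kantorovich mean of a polynomial is again a polynomial in the corner of the cell:
`w² ∫∫_{[a, a + 1/w] × [b, b + 1/w]} P = (cellMean w P) (a, b)`, and `cellMean w P - P` only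
contains monomials of degree `< deg P`, so `cellMean w P` has the same total degree as `P`.
Hence `S_w P = G_w (cellMean w P)` for the generalized sampling operator `G_w`, and `G_w`
reproduces polynomials `Q` of degree `≤ r - 1`: expanding `Q (k/w, j/w)` in powers of `w x - k`
and `w y - j`, the partition of unity and the vanishing moments of orders `1, …, r - 1` kill every
term but `Q (x, y)`. The finite absolute moment of order `r` makes all these series summable.
-/

namespace MvPolynomial

variable {σ τ R : Type*}

theorem totalDegree_bind₁_le [CommSemiring R] (f : σ → MvPolynomial τ R)
    (hf : ∀ i, (f i).totalDegree ≤ 1) (p : MvPolynomial σ R) :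
    (bind₁ f p).totalDegree ≤ p.totalDegree := by
  conv_lhs => rw [p.as_sum, map_sum]
  refine totalDegree_finsetSum_le fun m hm => ?_
  rw [bind₁_monomial]
  calc (C (coeff m p) * ∏ i ∈ m.support, f i ^ m i).totalDegree
      ≤ ∑ i ∈ m.support, m i := by
        refine (totalDegree_mul _ _).trans ?_
        rw [totalDegree_C, zero_add]
        refine (totalDegree_finsetProd _ _).trans (Finset.sum_le_sum fun i _ => ?_)
        exact (totalDegree_pow _ _).trans (by simpa using Nat.mul_le_mul_left (m i) (hf i))
    _ ≤ p.totalDegree := le_totalDegree hm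

theorem totalDegree_eq_of_sub_mem_restrictSupport [CommRing R] {P Q : MvPolynomial σ R}
    (h : Q - P ∈ restrictSupport R {s | s.degree < P.totalDegree}) :
    Q.totalDegree = P.totalDegree := by
  rcases eq_or_ne (Q - P) 0 with h0 | h0
  · rw [sub_eq_zero.mp h0]
  obtain ⟨m, hm⟩ := support_nonempty.mpr h0
  have hlt : (Q - P).totalDegree < P.totalDegree :=
    (Finset.sup_lt_iff ((Nat.zero_le _).trans_lt (h hm))).mpr fun s hs => h hs
  rw [← add_sub_cancel P Q, totalDegree_add_eq_left_of_totalDegree_lt hlt]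

theorem totalDegree_C_sub_C_mul_X_le [CommRing R] (a b : R) (i : σ) :
    (C a - C b * X i : MvPolynomial σ R).totalDegree ≤ 1 :=
  (totalDegree_sub _ _).trans
    (max_le (by simp) ((totalDegree_mul _ _).trans (by
      rw [totalDegree_C, zero_add]
      exact (totalDegree_monomial_le (Finsupp.single i 1) (1 : R)).trans (by simp))))

theorem eval_bind₁_C_sub_C_mul_X [CommRing R] (z s : σ → R) (a : R) (Q : MvPolynomial σ R) :
    eval s (bind₁ (fun i => C (z i) - C a * X i) Q) = eval (fun i => z i - a * s i) Q := by
  change aeval s (bind₁ _ Q) = aeval _ Q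
  rw [aeval_bind₁]
  simp

theorem eval_fin_two [CommSemiring R] (T : MvPolynomial (Fin 2) R) (s t : R) :
    eval ![s, t] T = ∑ m ∈ T.support, coeff m T * s ^ m 0 * t ^ m 1 := by
  simp [eval_eq', Fin.prod_univ_two, mul_assoc]

end MvPolynomial

open MvPolynomial Finset

-- `∑ᵢ cellMeanCoeff w n i * aⁱ` is the binomial expansion of `((a + h)ⁿ⁺¹ - aⁿ⁺¹) / ((n + 1) h)`
-- with `h = 1 / w`, the mean of `tⁿ` over `[a, a + h]`.
noncomputable def cellMeanCoeff (w : ℝ) (n i : ℕ) : ℝ := (n + 1).choose i / ((n + 1) * w ^ (n - i))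

theorem cellMeanCoeff_self (w : ℝ) (n : ℕ) : cellMeanCoeff w n n = 1 := by
  simp [cellMeanCoeff, Nat.choose_succ_self_right]
  exact Nat.cast_add_one_ne_zero n

theorem sum_cellMeanCoeff_mul_pow {w : ℝ} (hw : w ≠ 0) (n : ℕ) (a : ℝ) :
    ∑ i ∈ range (n + 1), cellMeanCoeff w n i * a ^ i = w * ∫ t in a..a + w⁻¹, t ^ n := by
  rw [integral_pow, add_pow, sum_range_succ _ (n + 1), Nat.sub_self, pow_zero, Nat.choose_self,
    Nat.cast_one, mul_one, mul_one, add_sub_cancel_right, sum_div, mul_sum]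
  refine sum_congr rfl fun i hi => ?_
  rw [Nat.sub_add_comm (Nat.lt_succ_iff.mp (mem_range.mp hi)), cellMeanCoeff, pow_succ, inv_pow]
  field_simp

noncomputable def cellMeanMonomial (w : ℝ) (m : Fin 2 →₀ ℕ) : MvPolynomial (Fin 2) ℝ :=
  ∑ il ∈ range (m 0 + 1) ×ˢ range (m 1 + 1),
    monomial (Finsupp.single 0 il.1 + Finsupp.single 1 il.2)
      (cellMeanCoeff w (m 0) il.1 * cellMeanCoeff w (m 1) il.2)

noncomputable def cellMean (w : ℝ) (P : MvPolynomial (Fin 2) ℝ) : MvPolynomial (Fin 2) ℝ :=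
  ∑ m ∈ P.support, coeff m P • cellMeanMonomial w m

theorem eval_cellMeanMonomial {w : ℝ} (hw : w ≠ 0) (m : Fin 2 →₀ ℕ) (a b : ℝ) :
    eval ![a, b] (cellMeanMonomial w m) =
      (w * ∫ t in a..a + w⁻¹, t ^ m 0) * (w * ∫ t in b..b + w⁻¹, t ^ m 1) := by
  rw [← sum_cellMeanCoeff_mul_pow hw, ← sum_cellMeanCoeff_mul_pow hw, sum_mul_sum,
    ← sum_product', cellMeanMonomial, map_sum]
  refine sum_congr rfl fun il _ => ?_
  simp [eval_monomial, Finsupp.prod_add_index', pow_add]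
  ring

theorem cellMeanMonomial_sub_mem (w : ℝ) (m : Fin 2 →₀ ℕ) :
    cellMeanMonomial w m - monomial m 1 ∈
      restrictSupport ℝ {s : Fin 2 →₀ ℕ | s.degree < m.degree} := by
  have hm : (m 0, m 1) ∈ range (m 0 + 1) ×ˢ range (m 1 + 1) := by simp
  have hsplit : Finsupp.single 0 (m 0) + Finsupp.single 1 (m 1) = m := by
    ext i; fin_cases i <;> simp
  rw [cellMeanMonomial, ← add_sum_erase _ _ hm]
  simp only [cellMeanCoeff_self, mul_one, hsplit, add_sub_cancel_left]
  refine Submodule.sum_mem _ fun il hil => (monomial_mem_restrictSupport _).mpr (Or.inl ?_)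
  obtain ⟨hne, hil⟩ := mem_erase.mp hil
  simp only [mem_product, mem_range] at hil
  rw [Set.mem_ofPred_eq, map_add, Finsupp.degree_single, Finsupp.degree_single,
    Finsupp.degree_eq_sum, Fin.sum_univ_two]
  have : il.1 ≠ m 0 ∨ il.2 ≠ m 1 := by
    by_contra! h; exact hne (Prod.ext h.1 h.2)
  omega

theorem cellMean_sub_mem (w : ℝ) (P : MvPolynomial (Fin 2) ℝ) :
    cellMean w P - P ∈ restrictSupport ℝ {s : Fin 2 →₀ ℕ | s.degree < P.totalDegree} := by
  have hsplit : cellMean w P - P =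
      ∑ m ∈ P.support, coeff m P • (cellMeanMonomial w m - monomial m 1) := by
    simp only [smul_sub, sum_sub_distrib, smul_monomial, smul_eq_mul, mul_one]
    rw [cellMean, ← as_sum]
  rw [hsplit]
  refine Submodule.sum_mem _ fun m hm => Submodule.smul_mem _ _ ?_
  refine restrictSupport_mono ℝ (fun s hs => ?_) (cellMeanMonomial_sub_mem w m)
  exact lt_of_lt_of_le hs (le_totalDegree hm)

theorem integral_integral_eval_eq_eval_cellMean {w : ℝ} (hw : w ≠ 0)
    (P : MvPolynomial (Fin 2) ℝ) (a b : ℝ) :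
    w ^ 2 * ∫ u in a..a + w⁻¹, ∫ v in b..b + w⁻¹, eval ![u, v] P = eval ![a, b] (cellMean w P) := by
  have hint : ∀ (n : ℕ) (x y : ℝ), IntervalIntegrable (fun t : ℝ => t ^ n) volume x y :=
    fun n x y => (continuous_pow n).intervalIntegrable x y
  have hinner : ∀ u, ∫ v in b..b + w⁻¹, eval ![u, v] P =
      ∑ m ∈ P.support, coeff m P * u ^ m 0 * ∫ v in b..b + w⁻¹, v ^ m 1 := fun u => by
    simp_rw [eval_fin_two]
    rw [intervalIntegral.integral_finsetSum fun m _ => (hint _ _ _).const_mul _]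
    simp only [intervalIntegral.integral_const_mul]
  simp_rw [hinner]
  rw [intervalIntegral.integral_finsetSum fun m _ => ((hint _ _ _).const_mul _).mul_const _,
    cellMean, map_sum, mul_sum]
  refine sum_congr rfl fun m _ => ?_
  rw [smul_eval, eval_cellMeanMonomial hw, intervalIntegral.integral_mul_const,
    intervalIntegral.integral_const_mul]
  ring

section Moments

variable {χ : ℝ × ℝ → ℝ}

theorem absMoment_le_Mmoment {p₁ p₂ η : ℕ} (h : p₁ + p₂ = η) :
    absMoment χ p₁ p₂ ≤ Mmoment χ η :=
  le_iSup (fun p : {p : ℕ × ℕ // p.1 + p.2 = η} => absMoment χ p.1.1 p.1.2) ⟨(p₁, p₂), h⟩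

theorem summable_abs_mul_of_absMoment_ne_top {p₁ p₂ : ℕ} (h : absMoment χ p₁ p₂ ≠ ⊤) (u v : ℝ) :
    Summable fun kj : ℤ × ℤ =>
      |χ (u - kj.1, v - kj.2)| * |u - kj.1| ^ p₁ * |v - kj.2| ^ p₂ := by
  have hle : ∑' kj : ℤ × ℤ, ENNReal.ofReal
      (|χ (u - kj.1, v - kj.2)| * |u - kj.1| ^ p₁ * |v - kj.2| ^ p₂) ≤ absMoment χ p₁ p₂ := by
    rw [ENNReal.tsum_prod']
    exact le_iSup₂_of_le (f := fun u v => ∑' k : ℤ, ∑' j : ℤ, ENNReal.ofReal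
      (|χ (u - k, v - j)| * |u - k| ^ p₁ * |v - j| ^ p₂)) u v le_rfl
  refine (ENNReal.summable_toReal (ne_top_of_le_ne_top h hle)).congr fun kj => ?_
  exact ENNReal.toReal_ofReal (by positivity)

theorem abs_pow_mul_abs_pow_le {s t : ℝ} {p q r : ℕ} (hpq : p + q ≤ r) :
    |s| ^ p * |t| ^ q ≤ (if |s| ≤ 1 ∧ |t| ≤ 1 then 1 else 0) + |s| ^ r + |t| ^ r := by
  have hsr := pow_nonneg (abs_nonneg s) r
  have htr := pow_nonneg (abs_nonneg t) r
  split_ifs with hst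
  · have := mul_le_one₀ (pow_le_one₀ (n := p) (abs_nonneg s) hst.1) (pow_nonneg (abs_nonneg t) q)
      (pow_le_one₀ (abs_nonneg t) hst.2)
    linarith
  · have hM : 1 ≤ max |s| |t| := by
      rw [not_and_or, not_le, not_le] at hst
      rcases hst with h | h
      · exact (h.le).trans (le_max_left _ _)
      · exact (h.le).trans (le_max_right _ _)
    calc |s| ^ p * |t| ^ q ≤ max |s| |t| ^ p * max |s| |t| ^ q := by
          gcongr
          exacts [le_max_left _ _, le_max_right _ _]
      _ ≤ max |s| |t| ^ r := by rw [← pow_add]; exact pow_le_pow_right₀ hM hpq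
      _ ≤ 0 + |s| ^ r + |t| ^ r := by
          rcases max_choice |s| |t| with h | h <;> rw [h] <;> linarith

theorem summable_ite_abs_sub_le_one (C u v : ℝ) :
    Summable fun kj : ℤ × ℤ => if |u - kj.1| ≤ 1 ∧ |v - kj.2| ≤ 1 then C else 0 := by
  refine summable_of_ne_finset_zero (s := .Icc ⌈u - 1⌉ ⌊u + 1⌋ ×ˢ .Icc ⌈v - 1⌉ ⌊v + 1⌋)
    fun kj hkj => if_neg fun h => hkj ?_
  simp only [abs_le] at h
  simp only [Finset.mem_product, Finset.mem_Icc, Int.ceil_le, Int.le_floor]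
  refine ⟨⟨?_, ?_⟩, ?_, ?_⟩ <;> linarith [h.1.1, h.1.2, h.2.1, h.2.2]

theorem summable_moment (hχb : ∃ C : ℝ, ∀ p, |χ p| ≤ C) {r : ℕ} (hM : Mmoment χ r < ⊤)
    (u v : ℝ) {p q : ℕ} (hpq : p + q ≤ r) :
    Summable fun kj : ℤ × ℤ => χ (u - kj.1, v - kj.2) * (u - kj.1) ^ p * (v - kj.2) ^ q := by
  obtain ⟨C, hC⟩ := hχb
  have hr0 := summable_abs_mul_of_absMoment_ne_top
    ((absMoment_le_Mmoment (add_zero r)).trans_lt hM).ne u v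
  have h0r := summable_abs_mul_of_absMoment_ne_top
    ((absMoment_le_Mmoment (zero_add r)).trans_lt hM).ne u v
  refine .of_norm_bounded (((summable_ite_abs_sub_le_one C u v).add hr0).add h0r) fun kj => ?_
  set s : ℝ := u - kj.1
  set t : ℝ := v - kj.2
  have hχ := abs_nonneg (χ (s, t))
  calc ‖χ (s, t) * s ^ p * t ^ q‖ = |χ (s, t)| * (|s| ^ p * |t| ^ q) := by
        rw [Real.norm_eq_abs, abs_mul, abs_mul, abs_pow, abs_pow, mul_assoc]
    _ ≤ |χ (s, t)| * ((if |s| ≤ 1 ∧ |t| ≤ 1 then 1 else 0) + |s| ^ r + |t| ^ r) :=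
        mul_le_mul_of_nonneg_left (abs_pow_mul_abs_pow_le hpq) hχ
    _ ≤ (if |s| ≤ 1 ∧ |t| ≤ 1 then C else 0) + |χ (s, t)| * |s| ^ r * |t| ^ 0
          + |χ (s, t)| * |s| ^ 0 * |t| ^ r := by
        split_ifs <;> linarith [hC (s, t)]

theorem hasSum_moment (hχb : ∃ C : ℝ, ∀ p, |χ p| ≤ C) (hpart : PartitionOfUnity2 χ)
    {r : ℕ} {c : ℝ} (hM : Mmoment χ r < ⊤) (hmom : MomentCondition χ r c)
    (u v : ℝ) {p q : ℕ} (hpq : p + q ≤ r - 1) :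
    HasSum (fun kj : ℤ × ℤ => χ (u - kj.1, v - kj.2) * (u - kj.1) ^ p * (v - kj.2) ^ q)
      ((0 : ℝ) ^ p * (0 : ℝ) ^ q) := by
  have hs := summable_moment hχb hM u v (hpq.trans (Nat.sub_le r 1))
  rw [hs.hasSum_iff, hs.tsum_prod]
  rcases Nat.eq_zero_or_pos (p + q) with h0 | hpos
  · obtain ⟨rfl, rfl⟩ : p = 0 ∧ q = 0 := by omega
    simpa using hpart u v
  · rw [hmom.1 u v p q hpos hpq]
    obtain hp | hq : p ≠ 0 ∨ q ≠ 0 := by omega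
    · simp [zero_pow hp]
    · simp [zero_pow hq]

theorem hasSum_eval_of_totalDegree_le (hχb : ∃ C : ℝ, ∀ p, |χ p| ≤ C)
    (hpart : PartitionOfUnity2 χ) {r : ℕ} {c : ℝ} (hM : Mmoment χ r < ⊤)
    (hmom : MomentCondition χ r c) {T : MvPolynomial (Fin 2) ℝ} (hT : T.totalDegree ≤ r - 1)
    (u v : ℝ) :
    HasSum (fun kj : ℤ × ℤ => χ (u - kj.1, v - kj.2) * eval ![u - kj.1, v - kj.2] T)
      (eval ![0, 0] T) := by
  have hdeg : ∀ m ∈ T.support, m 0 + m 1 ≤ r - 1 := fun m hm => by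
    simpa [Finsupp.sum_fintype, Fin.sum_univ_two] using (le_totalDegree hm).trans hT
  have hsum := hasSum_sum fun m hm =>
    (hasSum_moment hχb hpart hM hmom u v (hdeg m hm)).mul_left (coeff m T)
  have hfun : (fun kj : ℤ × ℤ => χ (u - kj.1, v - kj.2) * eval ![u - kj.1, v - kj.2] T) =
      fun kj => ∑ m ∈ T.support,
        coeff m T * (χ (u - kj.1, v - kj.2) * (u - kj.1) ^ m 0 * (v - kj.2) ^ m 1) := by
    funext kj
    rw [eval_fin_two, Finset.mul_sum]
    exact Finset.sum_congr rfl fun m _ => by ring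
  have hval : eval ![0, 0] T = ∑ m ∈ T.support, coeff m T * ((0 : ℝ) ^ m 0 * (0 : ℝ) ^ m 1) := by
    rw [eval_fin_two]
    exact Finset.sum_congr rfl fun m _ => by ring
  rw [hfun, hval]
  exact hsum

theorem Gop_eval_of_totalDegree_le (hχb : ∃ C : ℝ, ∀ p, |χ p| ≤ C)
    (hpart : PartitionOfUnity2 χ) {r : ℕ} {c : ℝ} (hM : Mmoment χ r < ⊤)
    (hmom : MomentCondition χ r c) {w : ℝ} (hw : w ≠ 0) {Q : MvPolynomial (Fin 2) ℝ}
    (hQ : Q.totalDegree ≤ r - 1) (x y : ℝ) :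
    Gop χ w (fun p => eval ![p.1, p.2] Q) x y = eval ![x, y] Q := by
  -- `T (s, t) = Q ((w x - s) / w, (w y - t) / w)` recentres the sampling nodes at `(w x, w y)`
  have hT := (totalDegree_bind₁_le _ (fun i => totalDegree_C_sub_C_mul_X_le (![x, y] i) w⁻¹ i)
    Q).trans hQ
  have hsum := hasSum_eval_of_totalDegree_le hχb hpart hM hmom hT (w * x) (w * y)
  simp only [eval_bind₁_C_sub_C_mul_X] at hsum
  have hnode : ∀ k j : ℤ,
      (fun i => ![x, y] i - w⁻¹ * ![w * x - k, w * y - j] i) = ![k / w, j / w] := by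
    intro k j
    funext i; fin_cases i <;> (simp; field_simp; ring)
  have hcentre : (fun i => ![x, y] i - w⁻¹ * ![(0 : ℝ), 0] i) = ![x, y] := by
    funext i; fin_cases i <;> simp
  rw [hcentre] at hsum
  calc Gop χ w (fun p => eval ![p.1, p.2] Q) x y
      = ∑' k : ℤ, ∑' j : ℤ, χ (w * x - k, w * y - j) *
          eval (fun i => ![x, y] i - w⁻¹ * ![w * x - k, w * y - j] i) Q := by
        simp only [Gop, hnode]
    _ = eval ![x, y] Q := hsum.summable.tsum_prod.symm.trans hsum.tsum_eq

end Moments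

theorem Sop_eval_eq_Gop_cellMean (χ : ℝ × ℝ → ℝ) {w : ℝ} (hw : w ≠ 0)
    (P : MvPolynomial (Fin 2) ℝ) (x y : ℝ) :
    Sop χ w (fun p => eval ![p.1, p.2] P) x y =
      Gop χ w (fun p => eval ![p.1, p.2] (cellMean w P)) x y := by
  refine tsum_congr fun k => tsum_congr fun j => ?_
  rw [add_div, add_div, one_div, integral_integral_eval_eq_eval_cellMean hw]

theorem statement5_general (χ : ℝ × ℝ → ℝ) (hχb : ∃ C : ℝ, ∀ p, |χ p| ≤ C)
    (hpart : PartitionOfUnity2 χ)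
    (r : ℕ) (c : ℝ)
    (hMr : Mmoment χ r < ⊤)
    (hmom : MomentCondition χ r c)
    (w : ℝ) (hw : 0 < w)
    (P : MvPolynomial (Fin 2) ℝ) (hP : P.totalDegree ≤ r - 1) :
    ∃ Q : MvPolynomial (Fin 2) ℝ, Q.totalDegree = P.totalDegree ∧
      ∀ x y : ℝ, Sop χ w (fun p => MvPolynomial.eval ![p.1, p.2] P) x y =
        MvPolynomial.eval ![x, y] Q := by
  have hdeg : (cellMean w P).totalDegree = P.totalDegree :=
    totalDegree_eq_of_sub_mem_restrictSupport (cellMean_sub_mem w P)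
  refine ⟨cellMean w P, hdeg, fun x y => ?_⟩
  rw [Sop_eval_eq_Gop_cellMean χ hw.ne']
  exact Gop_eval_of_totalDegree_le hχb hpart hMr hmom hw.ne' (hdeg.trans_le hP) x y

/-- S_w maps algebraic polynomials of total degree at most r − 1 into algebraic
polynomials of the same degree. -/
theorem statement5 (χ : ℝ × ℝ → ℝ) (hχc : Continuous χ) (hχb : ∃ C : ℝ, ∀ p, |χ p| ≤ C)
    (hpart : PartitionOfUnity2 χ)
    (r : ℕ) (hr : 1 ≤ r) (c : ℝ)
    (hMr : Mmoment χ r < ⊤)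
    (hmom : MomentCondition χ r c)
    (w : ℝ) (hw : 0 < w)
    (P : MvPolynomial (Fin 2) ℝ) (hP : P.totalDegree ≤ r - 1) :
    ∃ Q : MvPolynomial (Fin 2) ℝ, Q.totalDegree = P.totalDegree ∧
      ∀ x y : ℝ, Sop χ w (fun p => MvPolynomial.eval ![p.1, p.2] P) x y =
        MvPolynomial.eval ![x, y] Q :=
  statement5_general χ hχb hpart r c hMr hmom w hw P hP
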